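/- arXiv:1702.06866 — 2 statements merged into one kernel-verified Lean document; each statement's English description precedes it below -/
import Mathlib

section
/- Let X and Y be compact metric spaces, let ω: ℝ₊ → ℝ₊ be concave and nondecreasing, and let v: X×Y → ℝ satisfy |v(x,y) − v(x',y')| ≤ ω(d(x,x') + d(y,y')) for all x,x' ∈ X and y,y' ∈ Y. Then for all p, p' ∈ Δ(X) and q, q' ∈ Δ(Y) one has |ṽ(p,q) − ṽ(p',q')| ≤ ω(d_KR(p,p') + d_KR(q,q')). -/
/-!
Let `D = d_KR(p,p') + d_KR(q,q')`. If `D = 0` then `p = p'` and `q = q'`, since bounded Lipschitz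
functions separate probability measures. Otherwise concavity and monotonicity give a supporting
line `ω t ≤ c + k t` with `k ≥ 0` and `c + k D = ω D`, so `v` has the affine modulus `c + k t` for
the `ℓ¹` distance on `X × Y`. Inf-convolving `v` with `k` times that distance yields a
`k`-Lipschitz `w` with `|v - w| ≤ c / 2`: the extension of `v - w` moves by at most `c`, and that
of `w` by at most `k D`, because the sections of `w` and their integrals are `k`-Lipschitz and
`d_KR` is a supremum over `1`-Lipschitz test functions.
-/

open MeasureTheory Set Filter Topology

noncomputable section
namespace GG

abbrev PM (S : Type*) [MeasurableSpace S] := MeasureTheory.ProbabilityMeasure S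

variable {S : Type*} [MeasurableSpace S]

/-- Dirac probability measure. -/
def dirac (s : S) : PM S := ⟨MeasureTheory.Measure.dirac s, inferInstance⟩

/-- Integral of a function against a probability measure (the affine extension `f̃`). -/
def iPM (f : S → ℝ) (p : PM S) : ℝ := ∫ s, f s ∂(p : MeasureTheory.Measure S)

/-- `r` is the mixture `t p + (1-t) q`. -/
def IsMix (t : NNReal) (p q r : PM S) : Prop :=
  (r : MeasureTheory.Measure S)
    = (t : ENNReal) • (p : MeasureTheory.Measure S)
      + ((1 : ENNReal) - (t : ENNReal)) • (q : MeasureTheory.Measure S)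

/-- Convexity of a set of probability measures. -/
def PMConvex (A : Set (PM S)) : Prop :=
  ∀ p ∈ A, ∀ q ∈ A, ∀ t : NNReal, t ≤ 1 → ∀ r : PM S, IsMix t p q r → r ∈ A

/-- Convexity of a set of pairs of probability measures. -/
def PMConvex2 (A : Set (PM S × PM S)) : Prop :=
  ∀ a ∈ A, ∀ b ∈ A, ∀ t : NNReal, t ≤ 1 → ∀ c : PM S × PM S,
    IsMix t a.1 b.1 c.1 → IsMix t a.2 b.2 c.2 → c ∈ A

/-- Convex hull of a set of probability measures. -/
def convexHullPM (A : Set (PM S)) : Set (PM S) := ⋂₀ {T | A ⊆ T ∧ PMConvex T}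

/-- Convex hull of a set of pairs of probability measures. -/
def convexHull2 (A : Set (PM S × PM S)) : Set (PM S × PM S) := ⋂₀ {T | A ⊆ T ∧ PMConvex2 T}

/-- Kantorovich–Rubinstein distance. -/
def dKR {S : Type*} [MeasurableSpace S] [PseudoMetricSpace S] (p q : PM S) : ℝ :=
  sSup {r | ∃ f : S → ℝ, LipschitzWith 1 f ∧ r = |iPM f p - iPM f q|}

def argmaxOn {α : Type*} (f : α → ℝ) (A : Set α) : Set α := {p ∈ A | ∀ q ∈ A, f q ≤ f p}

def argminOn {α : Type*} (f : α → ℝ) (A : Set α) : Set α := {p ∈ A | ∀ q ∈ A, f p ≤ f q}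

section Topo

variable [TopologicalSpace S] [OpensMeasurableSpace S]

/-- Graph of the linear extension `Γ̃`: the closed convex hull of the graph of `Γ`. -/
def tGraph (Γ : S → Set (PM S)) : Set (PM S × PM S) :=
  closure (convexHull2 {z | ∃ x : S, z.1 = dirac x ∧ z.2 ∈ Γ x})

/-- The linear extension `Γ̃ : Δ(S) ⇉ Δ(S)`. -/
def tStep (Γ : S → Set (PM S)) (p : PM S) : Set (PM S) := {q | (p, q) ∈ tGraph Γ}

/-- Iterates `Γ̃ⁿ`, with `Γ̃⁰(p) = {p}` and `Γ̃^{n+1} = Γ̃ⁿ ∘ Γ̃`. -/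
def tIter (Γ : S → Set (PM S)) : ℕ → PM S → Set (PM S)
  | 0, p => {p}
  | n + 1, p => {r | ∃ q ∈ tStep Γ p, r ∈ tIter Γ n q}

/-- The reachable set `Γ^∞(x)`: closure of `⋃ₙ Γ̃ⁿ(δ_x)`. -/
def reach (Γ : S → Set (PM S)) (x : S) : Set (PM S) :=
  closure (⋃ n : ℕ, tIter Γ n (dirac x))

/-- There is a bounded measurable lower semicontinuous `φ` whose (expectation) argmax over
`R x` is exactly `{δ_x}`, for every `x`. -/
def AcyclicFor (R : S → Set (PM S)) : Prop :=
  ∃ φ : S → ℝ, Measurable φ ∧ (∃ C : ℝ, ∀ s, |φ s| ≤ C) ∧ LowerSemicontinuous φ ∧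
    ∀ x : S, argmaxOn (iPM φ) (R x) = {dirac x}

/-- There is a bounded measurable upper semicontinuous `ψ` whose (expectation) argmin over
`R y` is exactly `{δ_y}`, for every `y`. -/
def AcyclicForMin (R : S → Set (PM S)) : Prop :=
  ∃ ψ : S → ℝ, Measurable ψ ∧ (∃ C : ℝ, ∀ s, |ψ s| ≤ C) ∧ UpperSemicontinuous ψ ∧
    ∀ y : S, argminOn (iPM ψ) (R y) = {dirac y}

end Topo

section TwoPlayers

variable {X Y : Type*} [MeasurableSpace X] [MeasurableSpace Y]

/-- The bi-affine extension `ṽ(p,q) = ∫∫ v dp dq`. -/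
def iXY (v : X × Y → ℝ) (p : PM X) (q : PM Y) : ℝ :=
  ∫ x, ∫ y, v (x, y) ∂(q : MeasureTheory.Measure Y) ∂(p : MeasureTheory.Measure X)

/-- `v` is excessive: `v(x,y) = max_{p ∈ Γ(x)} ṽ(p,y)`. -/
def Excessive (Γ : X → Set (PM X)) (v : X × Y → ℝ) : Prop :=
  ∀ x : X, ∀ y : Y, IsGreatest ((fun p => iXY v p (dirac y)) '' Γ x) (v (x, y))

/-- `v` is depressive: `v(x,y) = min_{q ∈ Λ(y)} ṽ(x,q)`. -/
def Depressive (Λ : Y → Set (PM Y)) (v : X × Y → ℝ) : Prop :=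
  ∀ x : X, ∀ y : Y, IsLeast ((fun q => iXY v (dirac x) q) '' Λ y) (v (x, y))

/-- `v` is balanced: `v(x,y) = max_{p ∈ Γ(x)} min_{q ∈ Λ(y)} ṽ(p,q)
    = min_{q ∈ Λ(y)} max_{p ∈ Γ(x)} ṽ(p,q)`. -/
def Balanced (Γ : X → Set (PM X)) (Λ : Y → Set (PM Y)) (v : X × Y → ℝ) : Prop :=
  ∀ x : X, ∀ y : Y,
    IsGreatest {r | ∃ p ∈ Γ x, IsLeast (iXY v p '' Λ y) r} (v (x, y)) ∧
    IsLeast {r | ∃ q ∈ Λ y, IsGreatest ((fun p => iXY v p q) '' Γ x) r} (v (x, y))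

variable [TopologicalSpace X] [OpensMeasurableSpace X] [TopologicalSpace Y] [OpensMeasurableSpace Y]

/-- Property P1: for all `(x,y)` there is `p ∈ Γ^∞(x)` with `v(x,y) = ṽ(p,y) ≤ ũ(p,y)`. -/
def P1 (Γ : X → Set (PM X)) (u v : X × Y → ℝ) : Prop :=
  ∀ x : X, ∀ y : Y, ∃ p ∈ reach Γ x,
    v (x, y) = iXY v p (dirac y) ∧ iXY v p (dirac y) ≤ iXY u p (dirac y)

/-- Property P2: for all `(x,y)` there is `q ∈ Λ^∞(y)` with `v(x,y) = ṽ(x,q) ≥ ũ(x,q)`. -/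
def P2 (Λ : Y → Set (PM Y)) (u v : X × Y → ℝ) : Prop :=
  ∀ x : X, ∀ y : Y, ∃ q ∈ reach Λ y,
    v (x, y) = iXY v (dirac x) q ∧ iXY u (dirac x) q ≤ iXY v (dirac x) q

/-- `w` satisfies the Shapley fixed point equation for discount factor `lam`:
`w(x,y) = max_{p∈Γ(x)} min_{q∈Λ(y)} (λ u(x,y) + (1-λ) w̃(p,q))
        = min_{q∈Λ(y)} max_{p∈Γ(x)} (λ u(x,y) + (1-λ) w̃(p,q))`. -/
def ShapleyEq (Γ : X → Set (PM X)) (Λ : Y → Set (PM Y)) (u : X × Y → ℝ)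
    (lam : ℝ) (w : X × Y → ℝ) : Prop :=
  ∀ x : X, ∀ y : Y,
    IsGreatest {r | ∃ p ∈ Γ x,
      IsLeast ((fun q => lam * u (x, y) + (1 - lam) * iXY w p q) '' Λ y) r} (w (x, y)) ∧
    IsLeast {r | ∃ q ∈ Λ y,
      IsGreatest ((fun p => lam * u (x, y) + (1 - lam) * iXY w p q) '' Γ x) r} (w (x, y))

end TwoPlayers

/-- A standard gambling game: compact metric state spaces, continuous payoff,
continuous transition multifunctions with nonempty convex compact values,
leavable and non expansive. -/
structure StdGame (X Y : Type*) [MetricSpace X] [MeasurableSpace X] [OpensMeasurableSpace X]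
    [MetricSpace Y] [MeasurableSpace Y] [OpensMeasurableSpace Y] where
  G : X → Set (PM X)
  L : Y → Set (PM Y)
  u : X × Y → ℝ
  u_cont : Continuous u
  G_ne : ∀ x, (G x).Nonempty
  G_cvx : ∀ x, PMConvex (G x)
  G_cpt : ∀ x, IsCompact (G x)
  G_cont : ∀ ε : ℝ, 0 < ε → ∃ α : ℝ, 0 < α ∧ ∀ x x' : X, dist x x' ≤ α →
    ∀ p ∈ G x, ∃ p' ∈ G x', dKR p p' ≤ ε
  G_leav : ∀ x, dirac x ∈ G x
  G_nonexp : ∀ x x' : X, ∀ p ∈ G x, ∃ p' ∈ G x', dKR p p' ≤ dist x x'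
  L_ne : ∀ y, (L y).Nonempty
  L_cvx : ∀ y, PMConvex (L y)
  L_cpt : ∀ y, IsCompact (L y)
  L_cont : ∀ ε : ℝ, 0 < ε → ∃ α : ℝ, 0 < α ∧ ∀ y y' : Y, dist y y' ≤ α →
    ∀ q ∈ L y, ∃ q' ∈ L y', dKR q q' ≤ ε
  L_leav : ∀ y, dirac y ∈ L y
  L_nonexp : ∀ y y' : Y, ∀ q ∈ L y, ∃ q' ∈ L y', dKR q q' ≤ dist y y'

end GG

open scoped NNReal

theorem ConcaveOn.exists_le_add_mul_sub {ω : ℝ → ℝ} (hconc : ConcaveOn ℝ (Ici 0) ω)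
    (hmono : MonotoneOn ω (Ici 0)) {D : ℝ} (hD : 0 < D) :
    ∃ k : ℝ≥0, ∀ t, 0 ≤ t → ω t ≤ ω D + k * (t - D) := by
  set A := (fun t => (ω D - ω t) / (D - t)) '' Ico 0 D
  have hA : A.Nonempty := ⟨_, 0, ⟨le_rfl, hD⟩, rfl⟩
  have hA_nonneg : ∀ r ∈ A, 0 ≤ r := by
    rintro _ ⟨t, ⟨ht, htD⟩, rfl⟩
    exact div_nonneg (sub_nonneg.mpr (hmono ht hD.le htD.le)) (sub_nonneg.mpr htD.le)
  refine ⟨⟨sInf A, le_csInf hA hA_nonneg⟩, fun t ht => ?_⟩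
  show ω t ≤ ω D + sInf A * (t - D)
  rcases lt_trichotomy t D with htD | rfl | hDt
  · have := csInf_le ⟨0, hA_nonneg⟩ ⟨t, ⟨ht, htD⟩, rfl⟩
    rw [le_div_iff₀ (sub_pos.mpr htD)] at this
    nlinarith
  · simp
  · have : (ω t - ω D) / (t - D) ≤ sInf A := le_csInf hA <| by
      rintro _ ⟨s, ⟨hs, hsD⟩, rfl⟩
      exact hconc.slope_anti_adjacent hs ht hsD hDt
    rw [div_le_iff₀ (sub_pos.mpr hDt)] at this
    nlinarith

theorem exists_lipschitzWith_abs_sub_le {S : Type*} [PseudoMetricSpace S]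
    {v : S → ℝ} {c : ℝ} {K : ℝ≥0} (hv : ∀ z z', v z ≤ v z' + c + K * dist z z') :
    ∃ w : S → ℝ, LipschitzWith K w ∧ ∀ z, |v z - w z| ≤ c / 2 := by
  rcases isEmpty_or_nonempty S with hS | hS
  · exact ⟨0, LipschitzWith.const' 0, isEmptyElim⟩
  let g : S → ℝ := fun z => ⨅ z', v z' + K * dist z z'
  have hbdd : ∀ z, BddBelow (range fun z' => v z' + K * dist z z') := fun z =>
    ⟨v z - c, by rintro _ ⟨z', rfl⟩; linarith [hv z z']⟩
  have hg_le : ∀ z z', g z ≤ v z' + K * dist z z' := fun z => ciInf_le (hbdd z)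
  refine ⟨fun z => g z + c / 2, LipschitzWith.of_le_add_mul K fun z₁ z₂ => ?_, fun z => ?_⟩
  · have : g z₁ - K * dist z₁ z₂ ≤ g z₂ := le_ciInf fun z' => by
      have := dist_triangle z₁ z₂ z'
      nlinarith [hg_le z₁ z', K.2]
    linarith
  · have hle : g z ≤ v z := by simpa using hg_le z z
    have hge : v z - c ≤ g z := le_ciInf fun z' => by linarith [hv z z']
    rw [abs_le]
    constructor <;> linarith

theorem WithLp.prod_dist_one_eq_add {X Y : Type*} [PseudoMetricSpace X] [PseudoMetricSpace Y]
    (z z' : WithLp 1 (X × Y)) :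
    dist z z' = dist z.ofLp.1 z'.ofLp.1 + dist z.ofLp.2 z'.ofLp.2 := by
  rw [WithLp.prod_dist_eq_add (by simp)]
  simp

theorem Continuous.integrable_of_compactSpace {S E : Type*} [TopologicalSpace S] [CompactSpace S]
    [MeasurableSpace S] [OpensMeasurableSpace S] [NormedAddCommGroup E] {f : S → E}
    (hf : Continuous f) (μ : Measure S) [IsFiniteMeasure μ] : Integrable f μ :=
  hf.integrable_of_hasCompactSupport (HasCompactSupport.of_compactSpace f)

theorem lipschitzWith_integral {X Y : Type*} [PseudoMetricSpace X] [MeasurableSpace Y]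
    {F : X → Y → ℝ} {K : ℝ≥0} {μ : Measure Y} [IsProbabilityMeasure μ]
    (hF : ∀ y, LipschitzWith K fun x => F x y) (hint : ∀ x, Integrable (F x) μ) :
    LipschitzWith K fun x => ∫ y, F x y ∂μ := by
  refine LipschitzWith.of_dist_le_mul fun x x' => ?_
  rw [dist_eq_norm, ← integral_sub (hint x) (hint x')]
  simpa using norm_integral_le_of_norm_le_const (μ := μ)
    (ae_of_all _ fun y => (dist_eq_norm _ _).symm.trans_le ((hF y).dist_le_mul x x'))

namespace GG

section KantorovichRubinstein

variable {S : Type*} [MetricSpace S] [CompactSpace S] [MeasurableSpace S] [BorelSpace S]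

theorem abs_iPM_sub_le_two_mul_diam {f : S → ℝ} (hf : LipschitzWith 1 f) (p q : PM S) :
    |iPM f p - iPM f q| ≤ 2 * Metric.diam (univ : Set S) := by
  obtain ⟨s₀⟩ := nonempty_of_isProbabilityMeasure (p : Measure S)
  have hclose : ∀ μ : PM S, |iPM f μ - f s₀| ≤ Metric.diam (univ : Set S) := fun μ => by
    have hdiff : iPM f μ - f s₀ = ∫ s, (f s - f s₀) ∂(μ : Measure S) := by
      rw [integral_sub (hf.continuous.integrable_of_compactSpace _) (integrable_const _),
        integral_const]
      simp [iPM]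
    rw [hdiff]
    simpa using norm_integral_le_of_norm_le_const (μ := (μ : Measure S)) <| ae_of_all _ fun s =>
      (show ‖f s - f s₀‖ ≤ dist s s₀ by simpa [Real.dist_eq] using hf.dist_le_mul s s₀).trans
        (Metric.dist_le_diam_of_mem isCompact_univ.isBounded trivial trivial)
  calc |iPM f p - iPM f q| ≤ |iPM f p - f s₀| + |iPM f q - f s₀| := by
        simpa only [abs_sub_comm (f s₀)] using abs_sub_le (iPM f p) (f s₀) (iPM f q)
    _ ≤ 2 * Metric.diam (univ : Set S) := by linarith [hclose p, hclose q]

theorem abs_iPM_sub_le_dKR {f : S → ℝ} (hf : LipschitzWith 1 f) (p q : PM S) :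
    |iPM f p - iPM f q| ≤ dKR p q :=
  le_csSup ⟨_, by rintro r ⟨g, hg, rfl⟩; exact abs_iPM_sub_le_two_mul_diam hg p q⟩ ⟨f, hf, rfl⟩

theorem dKR_nonneg (p q : PM S) : 0 ≤ dKR p q :=
  (abs_nonneg _).trans (abs_iPM_sub_le_dKR (LipschitzWith.const' (0 : ℝ)) p q)

theorem abs_iPM_sub_le_mul_dKR {K : ℝ≥0} {f : S → ℝ} (hf : LipschitzWith K f) (p q : PM S) :
    |iPM f p - iPM f q| ≤ K * dKR p q := by
  rcases eq_zero_or_pos K with rfl | hK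
  · obtain ⟨s₀⟩ := nonempty_of_isProbabilityMeasure (p : Measure S)
    have hconst : f = fun _ => f s₀ :=
      funext fun s => dist_le_zero.mp (by simpa using hf.dist_le_mul s s₀)
    rw [iPM, iPM, hconst]
    simp
  · have hg : LipschitzWith 1 fun s => (K : ℝ)⁻¹ * f s := by
      have := (lipschitzWith_smul ((K : ℝ)⁻¹)).comp hf
      rwa [nnnorm_inv, NNReal.nnnorm_eq, inv_mul_cancel₀ hK.ne'] at this
    have hscale : ∀ μ : PM S, iPM f μ = K * iPM (fun s => (K : ℝ)⁻¹ * f s) μ := fun μ => by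
      simp [iPM, integral_const_mul, hK.ne']
    rw [hscale p, hscale q, ← mul_sub, abs_mul, NNReal.abs_eq]
    gcongr
    exact abs_iPM_sub_le_dKR hg p q

theorem eq_of_dKR_eq_zero {p q : PM S} (h : dKR p q = 0) : p = q := by
  have hint : ∀ f : S → ℝ, (∃ K, LipschitzWith K f) → iPM f p = iPM f q := by
    rintro f ⟨K, hf⟩
    have := abs_iPM_sub_le_mul_dKR hf p q
    rw [h, mul_zero] at this
    exact sub_eq_zero.mp (abs_nonpos_iff.mp this)
  have : Tendsto (fun _ : ℕ => p) atTop (𝓝 q) :=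
    tendsto_iff_forall_lipschitz_integral_tendsto.mpr fun f _ hf => by
      show Tendsto (fun _ => iPM f p) atTop (𝓝 (iPM f q))
      rw [hint f hf]
      exact tendsto_const_nhds
  exact tendsto_nhds_unique tendsto_const_nhds this

end KantorovichRubinstein

section Product

variable {X Y : Type*} [MeasurableSpace X] [MeasurableSpace Y]

theorem abs_iXY_le {u : X × Y → ℝ} {C : ℝ} (hu : ∀ z, |u z| ≤ C) (p : PM X) (q : PM Y) :
    |iXY u p q| ≤ C := by
  have hinner : ∀ x, ‖∫ y, u (x, y) ∂(q : Measure Y)‖ ≤ C := fun x => by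
    simpa using norm_integral_le_of_norm_le_const (μ := (q : Measure Y))
      (ae_of_all _ fun y => (Real.norm_eq_abs _).trans_le (hu (x, y)))
  simpa [iXY] using norm_integral_le_of_norm_le_const (μ := (p : Measure X)) (ae_of_all _ hinner)

theorem iXY_add {u w : X × Y → ℝ} {p : PM X} {q : PM Y}
    (hu : Integrable u ((p : Measure X).prod q)) (hw : Integrable w ((p : Measure X).prod q)) :
    iXY (u + w) p q = iXY u p q + iXY w p q := by
  simp only [iXY]
  rw [← integral_prod _ hu, ← integral_prod _ hw, ← integral_prod _ (hu.add hw)]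
  exact integral_add hu hw

variable [MetricSpace X] [CompactSpace X] [BorelSpace X]
  [MetricSpace Y] [CompactSpace Y] [BorelSpace Y]

theorem abs_iXY_sub_le_of_lipschitzWith {w : X × Y → ℝ} {K : ℝ≥0}
    (hw : LipschitzWith K fun z : WithLp 1 (X × Y) => w z.ofLp) (p p' : PM X) (q q' : PM Y) :
    |iXY w p q - iXY w p' q'| ≤ K * (dKR p p' + dKR q q') := by
  have hX : ∀ y, LipschitzWith K fun x => w (x, y) := fun y =>
    LipschitzWith.of_dist_le_mul fun x x' => by
      simpa [WithLp.prod_dist_one_eq_add] using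
        hw.dist_le_mul (WithLp.toLp 1 (x, y)) (WithLp.toLp 1 (x', y))
  have hY : ∀ x, LipschitzWith K fun y => w (x, y) := fun x =>
    LipschitzWith.of_dist_le_mul fun y y' => by
      simpa [WithLp.prod_dist_one_eq_add] using
        hw.dist_le_mul (WithLp.toLp 1 (x, y)) (WithLp.toLp 1 (x, y'))
  have hw_cont : Continuous w := hw.continuous.comp (WithLp.prod_continuous_toLp 1 X Y)
  have hp : |iXY w p q - iXY w p' q| ≤ K * dKR p p' :=
    abs_iPM_sub_le_mul_dKR (lipschitzWith_integral hX fun x =>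
      (hY x).continuous.integrable_of_compactSpace _) p p'
  have hq : |iXY w p' q - iXY w p' q'| ≤ K * dKR q q' := by
    have hswap : ∀ q : PM Y, iXY w p' q = iPM (fun y => ∫ x, w (x, y) ∂(p' : Measure X)) q :=
      fun q => integral_integral_swap (hw_cont.integrable_of_compactSpace _)
    rw [hswap, hswap]
    exact abs_iPM_sub_le_mul_dKR (lipschitzWith_integral hY fun y =>
      (hX y).continuous.integrable_of_compactSpace _) q q'
  calc |iXY w p q - iXY w p' q'| ≤ |iXY w p q - iXY w p' q| + |iXY w p' q - iXY w p' q'| :=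
        abs_sub_le _ _ _
    _ ≤ K * (dKR p p' + dKR q q') := by rw [mul_add]; exact add_le_add hp hq

theorem abs_iXY_sub_le_add_mul {v : X × Y → ℝ} (hv : Measurable v) {c : ℝ} {K : ℝ≥0}
    (hmod : ∀ x x' y y', |v (x, y) - v (x', y')| ≤ c + K * (dist x x' + dist y y'))
    (p p' : PM X) (q q' : PM Y) :
    |iXY v p q - iXY v p' q'| ≤ c + K * (dKR p p' + dKR q q') := by
  obtain ⟨w, hw, hvw⟩ := exists_lipschitzWith_abs_sub_le (v := fun z : WithLp 1 (X × Y) => v z.ofLp)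
    (c := c) (K := K) fun z z' => by
      have := (le_abs_self _).trans (hmod z.ofLp.1 z'.ofLp.1 z.ofLp.2 z'.ofLp.2)
      rw [← WithLp.prod_dist_one_eq_add] at this
      linarith
  set w' : X × Y → ℝ := fun z => w (WithLp.toLp 1 z)
  have hvw' : ∀ z, |(v - w') z| ≤ c / 2 := fun z => hvw (WithLp.toLp 1 z)
  have hw'_cont : Continuous w' := hw.continuous.comp (WithLp.prod_continuous_toLp 1 X Y)
  have hsplit : ∀ (p : PM X) (q : PM Y), iXY v p q = iXY (v - w') p q + iXY w' p q := fun p q => by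
    rw [← iXY_add _ (hw'_cont.integrable_of_compactSpace _), sub_add_cancel]
    exact Integrable.of_bound (hv.sub hw'_cont.measurable).aestronglyMeasurable _
      (ae_of_all _ hvw')
  calc |iXY v p q - iXY v p' q'|
      ≤ |iXY (v - w') p q| + |iXY (v - w') p' q'| + |iXY w' p q - iXY w' p' q'| := by
        rw [hsplit p q, hsplit p' q', add_sub_add_comm]
        exact (abs_add_le _ _).trans (add_le_add_left (abs_sub _ _) _)
    _ ≤ c / 2 + c / 2 + K * (dKR p p' + dKR q q') :=
        add_le_add (add_le_add (abs_iXY_le hvw' p q) (abs_iXY_le hvw' p' q'))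
          (abs_iXY_sub_le_of_lipschitzWith hw p p' q q')
    _ = c + K * (dKR p p' + dKR q q') := by ring

end Product

theorem statement1_general
    {X Y : Type*} [MetricSpace X] [CompactSpace X]
    [MeasurableSpace X] [BorelSpace X]
    [MetricSpace Y] [CompactSpace Y]
    [MeasurableSpace Y] [BorelSpace Y]
    (ω : ℝ → ℝ)
    (hconc : ConcaveOn ℝ (Set.Ici 0) ω)
    (hmono : MonotoneOn ω (Set.Ici 0))
    (v : X × Y → ℝ) (hvmeas : Measurable v)
    (hmod : ∀ x x' : X, ∀ y y' : Y,
      |v (x, y) - v (x', y')| ≤ ω (dist x x' + dist y y'))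
    (p p' : PM X) (q q' : PM Y) :
    |iXY v p q - iXY v p' q'| ≤ ω (dKR p p' + dKR q q') := by
  have hp := dKR_nonneg p p'
  have hq := dKR_nonneg q q'
  rcases (add_nonneg hp hq).eq_or_lt with hD | hD
  · obtain ⟨x₀⟩ := nonempty_of_isProbabilityMeasure (p : Measure X)
    obtain ⟨y₀⟩ := nonempty_of_isProbabilityMeasure (q : Measure Y)
    have hp0 : dKR p p' = 0 := by linarith
    have hq0 : dKR q q' = 0 := by linarith
    calc |iXY v p q - iXY v p' q'| = 0 := by
          rw [eq_of_dKR_eq_zero hp0, eq_of_dKR_eq_zero hq0, sub_self, abs_zero]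
      _ ≤ ω 0 := by simpa using (abs_nonneg _).trans (hmod x₀ x₀ y₀ y₀)
      _ = ω (dKR p p' + dKR q q') := by rw [hp0, hq0, add_zero]
  obtain ⟨k, hk⟩ := hconc.exists_le_add_mul_sub hmono hD
  have hmod_affine : ∀ x x' y y', |v (x, y) - v (x', y')| ≤
      (ω (dKR p p' + dKR q q') - k * (dKR p p' + dKR q q')) + k * (dist x x' + dist y y') :=
    fun x x' y y' => (hmod x x' y y').trans <| by
      linarith [hk (dist x x' + dist y y') (by positivity)]
  calc |iXY v p q - iXY v p' q'|
      ≤ (ω (dKR p p' + dKR q q') - k * (dKR p p' + dKR q q')) + k * (dKR p p' + dKR q q') :=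
        abs_iXY_sub_le_add_mul hvmeas hmod_affine p p' q q'
    _ = ω (dKR p p' + dKR q q') := by ring

/-- if a bounded measurable function v on X x Y admits a concave
nondecreasing modulus of continuity omega, then its bi-affine extension admits the same
modulus with respect to the Kantorovich-Rubinstein distances. -/
theorem statement1
    {X Y : Type*} [MetricSpace X] [CompactSpace X] [Nonempty X]
    [MeasurableSpace X] [BorelSpace X]
    [MetricSpace Y] [CompactSpace Y] [Nonempty Y]
    [MeasurableSpace Y] [BorelSpace Y]
    (ω : ℝ → ℝ)
    (hconc : ConcaveOn ℝ (Set.Ici 0) ω)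
    (hmono : MonotoneOn ω (Set.Ici 0))
    (v : X × Y → ℝ) (hvmeas : Measurable v)
    (hmod : ∀ x x' : X, ∀ y y' : Y,
      |v (x, y) - v (x', y')| ≤ ω (dist x x' + dist y y'))
    (p p' : PM X) (q q' : PM Y) :
    |iXY v p q - iXY v p' q'| ≤ ω (dKR p p' + dKR q q') :=
  statement1_general ω hconc hmono v hvmeas hmod p p' q q'

end GG
end
end

section
/- Consider a one-player leavable and non-expansive gambling house (X, Γ, u). If v₁: X → ℝ is bounded measurable and satisfies P1, and v₂: X → ℝ is continuous, excessive and satisfies v₂ ≥ u, then v₁ ≤ v₂ pointwise. -/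
open MeasureTheory Set Filter Topology

noncomputable section
namespace GG

/-- A one-player leavable and non-expansive gambling house: compact metric state space,
continuous payoff, continuous transition multifunction with nonempty convex compact
values, leavable and non expansive. -/
structure StdHouse (X : Type*) [MetricSpace X] [MeasurableSpace X] [OpensMeasurableSpace X] where
  G : X → Set (PM X)
  u : X → ℝ
  u_cont : Continuous u
  G_ne : ∀ x, (G x).Nonempty
  G_cvx : ∀ x, PMConvex (G x)
  G_cpt : ∀ x, IsCompact (G x)
  G_cont : ∀ ε : ℝ, 0 < ε → ∃ α : ℝ, 0 < α ∧ ∀ x x' : X, dist x x' ≤ α →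
    ∀ p ∈ G x, ∃ p' ∈ G x', dKR p p' ≤ ε
  G_leav : ∀ x, dirac x ∈ G x
  G_nonexp : ∀ x x' : X, ∀ p ∈ G x, ∃ p' ∈ G x', dKR p p' ≤ dist x x'

variable {X : Type*} [MeasurableSpace X]

/-- One-player excessive function: w(x) = max over p in Gamma(x) of w̃(p). -/
def Excessive1 (Γ : X → Set (PM X)) (w : X → ℝ) : Prop :=
  ∀ x : X, IsGreatest (iPM w '' Γ x) (w x)

/-- One-player Shapley equation: w(x) = max over p in Gamma(x) of
(lam u(x) + (1-lam) w̃(p)). -/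
def ShapleyEq1 (Γ : X → Set (PM X)) (u : X → ℝ) (lam : ℝ) (w : X → ℝ) : Prop :=
  ∀ x : X, IsGreatest ((fun p => lam * u x + (1 - lam) * iPM w p) '' Γ x) (w x)

variable [TopologicalSpace X] [OpensMeasurableSpace X]

/-- One-player property P1: for every x there is p in the reachable set from x with
w(x) = w̃(p) <= ũ(p). -/
def P1' (Γ : X → Set (PM X)) (u w : X → ℝ) : Prop :=
  ∀ x : X, ∃ p ∈ reach Γ x, w x = iPM w p ∧ iPM w p ≤ iPM u p

end GG

namespace GG


section Aux

variable {S : Type*} [MeasurableSpace S]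

lemma iPM_mix {t : NNReal} (ht : t ≤ 1) {p q r : PM S} (h : IsMix t p q r)
    (f : S → ℝ) (hf : Integrable f (p : Measure S)) (hg : Integrable f (q : Measure S)) :
    iPM f r = t * iPM f p + (1 - t) * iPM f q := by
  unfold iPM
  rw [h]
  rw [integral_add_measure]
  · rw [integral_smul_measure, integral_smul_measure]
    have h1 : ((t : ENNReal)).toReal = (t : ℝ) := by simp
    have h2 : (((1 : ENNReal) - (t : ENNReal))).toReal = 1 - (t : ℝ) := by
      rw [ENNReal.toReal_sub_of_le (by exact_mod_cast ht) (by simp)]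
      simp
    rw [h1, h2, smul_eq_mul, smul_eq_mul]
  · exact hf.smul_measure (by simp)
  · exact hg.smul_measure (by
      refine ne_of_lt (lt_of_le_of_lt (tsub_le_self) ?_); simp)

end Aux

section Aux2

variable {X : Type*} [MetricSpace X] [CompactSpace X]
  [MeasurableSpace X] [BorelSpace X]

lemma iPM_continuous {f : X → ℝ} (hf : Continuous f) :
    Continuous (fun p : PM X => iPM f p) := by
  have : (fun p : PM X => iPM f p)
      = fun p : PM X => ∫ x, (BoundedContinuousFunction.mkOfCompact ⟨f, hf⟩) x
          ∂(p : Measure X) := rfl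
  rw [this]
  exact MeasureTheory.ProbabilityMeasure.continuous_integral_boundedContinuousFunction _

lemma iPM_integrable {f : X → ℝ} (hf : Continuous f) (p : PM X) :
    Integrable f (p : Measure X) :=
  (BoundedContinuousFunction.mkOfCompact ⟨f, hf⟩).integrable _

lemma iPM_dirac (f : X → ℝ) (hf : Measurable f) (x : X) : iPM f (dirac x) = f x := by
  unfold iPM dirac
  simp [MeasureTheory.integral_dirac]

lemma reach_le {Γ : X → Set (PM X)} {w : X → ℝ} (hw : Continuous w)
    (hexc : Excessive1 Γ w) {x : X} {p : PM X} (hp : p ∈ reach Γ x) :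
    iPM w p ≤ w x := by
  set A : Set (PM X × PM X) := {z | iPM w z.2 ≤ iPM w z.1} with hA
  have hAclosed : IsClosed A :=
    isClosed_le ((iPM_continuous hw).comp continuous_snd)
      ((iPM_continuous hw).comp continuous_fst)
  have hAcvx : PMConvex2 A := by
    intro a ha b hb t ht c hc1 hc2
    have h1 := iPM_mix ht hc1 w (iPM_integrable hw _) (iPM_integrable hw _)
    have h2 := iPM_mix ht hc2 w (iPM_integrable hw _) (iPM_integrable hw _)
    have ht0 : (0:ℝ) ≤ (t:ℝ) := t.coe_nonneg
    have ht1 : (0:ℝ) ≤ 1 - (t:ℝ) := by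
      have : (t:ℝ) ≤ 1 := by exact_mod_cast ht
      linarith
    simp only [hA, Set.mem_setOf_eq] at ha hb ⊢
    rw [h1, h2]
    have := mul_le_mul_of_nonneg_left ha ht0
    have := mul_le_mul_of_nonneg_left hb ht1
    linarith
  have hbase : {z : PM X × PM X | ∃ y : X, z.1 = dirac y ∧ z.2 ∈ Γ y} ⊆ A := by
    rintro ⟨p1, p2⟩ ⟨y, rfl, hp2⟩
    simp only [hA, Set.mem_setOf_eq]
    rw [iPM_dirac w hw.measurable]
    exact (hexc y).2 ⟨p2, hp2, rfl⟩
  have hgraph : tGraph Γ ⊆ A := by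
    have h1 : convexHull2 {z : PM X × PM X | ∃ y : X, z.1 = dirac y ∧ z.2 ∈ Γ y} ⊆ A :=
      Set.sInter_subset_of_mem ⟨hbase, hAcvx⟩
    exact closure_minimal h1 hAclosed
  have hiter : ∀ n : ℕ, ∀ p q : PM X, q ∈ tIter Γ n p → iPM w q ≤ iPM w p := by
    intro n
    induction n with
    | zero => intro p q hq; simp only [tIter, Set.mem_singleton_iff] at hq; rw [hq]
    | succ m ih =>
      rintro p q ⟨q', hq', hq⟩
      exact le_trans (ih q' q hq) (hgraph hq')
  have hcl : p ∈ closure (⋃ n : ℕ, tIter Γ n (dirac x)) := hp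
  have hC : IsClosed {q : PM X | iPM w q ≤ w x} :=
    isClosed_le (iPM_continuous hw) continuous_const
  have hsub : (⋃ n : ℕ, tIter Γ n (dirac x)) ⊆ {q : PM X | iPM w q ≤ w x} := by
    rintro q hq
    obtain ⟨n, hn⟩ := Set.mem_iUnion.mp hq
    have := hiter n (dirac x) q hn
    rwa [iPM_dirac w hw.measurable] at this
  exact closure_minimal hsub hC hcl

end Aux2

/-- in a one-player leavable non-expansive gambling house, any bounded
measurable function satisfying P1 is pointwise below any continuous excessive function
dominating u. -/
theorem statement17
    {X : Type*} [MetricSpace X] [CompactSpace X] [Nonempty X]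
    [MeasurableSpace X] [BorelSpace X]
    (g : StdHouse X)
    (v1 : X → ℝ) (h1meas : Measurable v1) (h1bdd : ∃ C : ℝ, ∀ x, |v1 x| ≤ C)
    (h1 : P1' g.G g.u v1)
    (v2 : X → ℝ) (h2cont : Continuous v2) (h2exc : Excessive1 g.G v2)
    (h2u : ∀ x, g.u x ≤ v2 x) :
    ∀ x, v1 x ≤ v2 x := by
  intro x
  obtain ⟨p, hp, heq, hle⟩ := h1 x
  have h2 : iPM g.u p ≤ iPM v2 p :=
    integral_mono (iPM_integrable g.u_cont p) (iPM_integrable h2cont p) h2u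
  have h3 : iPM v2 p ≤ v2 x := reach_le h2cont h2exc hp
  calc v1 x = iPM v1 p := heq
    _ ≤ iPM g.u p := hle
    _ ≤ iPM v2 p := h2
    _ ≤ v2 x := h3

end GG
end
end
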